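/- Let τ ∈ (0,1) and let B^{(0)}, B^{(1)}, B^{(2)}, … be a sequence of bases of the same full-rank lattice Λ in ℝ^n where B^{(m+1)} is obtained from B^{(m)} by replacing one column b_i by b_i − s for some s ∈ Λ(B^{(m)}_{[n]∖i}) with ‖b_i − s‖² < τ‖b_i‖² (an effective SR update). Then the number of steps that update a given column i is at most log_{1/τ}( ‖b_i^{(0)}‖² / λ_1(B^{(0)})² ); in particular, the total number of effective updates is finite and at most Σ_{i=1}^n log_{1/τ}( ‖b_i^{(0)}‖² / λ_1(B^{(0)})² ). -/

import Mathlib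

open Finset

noncomputable section

/-- `ℝ^n` with the Euclidean norm. -/
abbrev Euc (n : ℕ) := EuclideanSpace ℝ (Fin n)

/-- The lattice generated by the columns `B 1, …, B n`. -/
def lattice {n : ℕ} (B : Fin n → Euc n) : Set (Euc n) :=
  {v | ∃ c : Fin n → ℤ, v = ∑ i, (c i : ℝ) • B i}

/-- The sublattice generated by all the columns of `B` except the `i`-th one. -/
def subLattice {n : ℕ} (B : Fin n → Euc n) (i : Fin n) : Set (Euc n) :=
  {v | ∃ c : Fin n → ℤ, c i = 0 ∧ v = ∑ j, (c j : ℝ) • B j}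

/-- The `k`-th successive minimum `λ_k(B)` of the lattice generated by `B`. -/
def succMin {n : ℕ} (B : Fin n → Euc n) (k : ℕ) : ℝ :=
  sInf {r : ℝ | ∃ v : Fin k → Euc n, (∀ j, v j ∈ lattice B) ∧
    LinearIndependent ℝ v ∧ ∀ j, ‖v j‖ ≤ r}

/-- `B` is SR-CVP reduced if no vector of the sublattice generated by the other basis
vectors can shorten a basis vector. -/
def SRCVPReduced {n : ℕ} (B : Fin n → Euc n) : Prop :=
  ∀ i : Fin n, ∀ s ∈ subLattice B i, ‖B i‖ ≤ ‖B i - s‖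

/-!
An SR update replaces `b_i` by `b_i - s` with `s` in the span of the other columns, so it
preserves linear independence and keeps every column in `Λ(B⁽⁰⁾)`. Hence all columns ever produced
are nonzero vectors of `Λ(B⁽⁰⁾)` and have norm at least `λ₁(B⁽⁰⁾)`. Since every update of column `i`
multiplies `‖b_i‖²` by less than `τ` and other updates leave it alone, `k` updates of column `i`
force `λ₁² ≤ τ^k ‖b_i⁽⁰⁾‖²`, i.e. `k ≤ log_{1/τ} (‖b_i⁽⁰⁾‖² / λ₁²)`; summing over `i` bounds the
total number of updates.
-/

section

open Module

variable {n : ℕ}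

lemma lattice_eq_span (B : Fin n → Euc n) :
    lattice B = (Submodule.span ℤ (Set.range B) : Set (Euc n)) := by
  ext v
  simp only [lattice, Set.mem_ofPred_eq, SetLike.mem_coe, Submodule.mem_span_range_iff_exists_fun,
    Int.cast_smul_eq_zsmul, eq_comm]

lemma mem_lattice_self (B : Fin n → Euc n) (i : Fin n) : B i ∈ lattice B := by
  rw [lattice_eq_span]
  exact Submodule.subset_span ⟨i, rfl⟩

lemma lattice_subset_lattice {B C : Fin n → Euc n} (h : ∀ j, B j ∈ lattice C) :
    lattice B ⊆ lattice C := by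
  simp only [lattice_eq_span, SetLike.coe_subset_coe] at h ⊢
  exact Submodule.span_le.mpr (Set.range_subset_iff.mpr h)

lemma subLattice_subset_lattice (B : Fin n → Euc n) (i : Fin n) :
    subLattice B i ⊆ lattice B := by
  rintro v ⟨c, -, rfl⟩
  exact ⟨c, rfl⟩

lemma subLattice_subset_span (B : Fin n → Euc n) (i : Fin n) :
    subLattice B i ⊆ Submodule.span ℝ (B '' {i}ᶜ) := by
  rintro v ⟨c, hc, rfl⟩
  refine Submodule.sum_mem _ fun j _ => ?_
  rcases eq_or_ne j i with rfl | hj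
  · simp [hc]
  · exact Submodule.smul_mem _ _ (Submodule.subset_span ⟨j, hj, rfl⟩)

lemma LinearIndependent.update_sub_of_mem_span {ι R M : Type*} [DecidableEq ι] [CommRing R]
    [AddCommGroup M] [Module R M] {f : ι → M} (hf : LinearIndependent R f) {i : ι} {s : M}
    (hs : s ∈ Submodule.span R (f '' {i}ᶜ)) :
    LinearIndependent R (Function.update f i (f i - s)) := by
  obtain ⟨l, hl, rfl⟩ := (Finsupp.mem_span_image_iff_linearCombination R).mp hs
  refine hf.update i _ ⟨1, one_mem _, Finsupp.single i 1 - l, ?_, ?_⟩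
  · have : l i = 0 := Finsupp.notMem_support_iff.mp fun h => hl h rfl
    simp [this, one_mem]
  · simp [map_sub]

lemma exists_pos_le_norm_of_mem_lattice {B : Fin n → Euc n} (hB : LinearIndependent ℝ B) :
    ∃ ε > 0, ∀ v ∈ lattice B, v ≠ 0 → ε ≤ ‖v‖ := by
  let b : Basis (Fin n) ℝ (Euc n) :=
    basisOfLinearIndependentOfCardEqFinrank' B hB (by simp)
  have hb : ⇑b = B := Basis.coe_mk _ _
  have : DiscreteTopology (Submodule.span ℤ (Set.range b)) := inferInstance
  obtain ⟨ε, hε, hball⟩ := Metric.exists_ball_inter_eq_singleton_of_mem_discrete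
    DiscreteTopology.isDiscrete (Submodule.zero_mem (Submodule.span ℤ (Set.range b)))
  refine ⟨ε, hε, fun v hv hv0 => not_lt.mp fun hlt => hv0 ?_⟩
  rw [lattice_eq_span, ← hb] at hv
  exact hball.subset ⟨mem_ball_zero_iff.mpr hlt, hv⟩

lemma succMin_one_le_norm {B : Fin n → Euc n} {v : Euc n} (hv : v ∈ lattice B) (hv0 : v ≠ 0) :
    succMin B 1 ≤ ‖v‖ := by
  refine csInf_le ⟨0, ?_⟩ ⟨fun _ => v, fun _ => hv, linearIndependent_unique_iff.mpr hv0,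
    fun _ => le_rfl⟩
  rintro r ⟨w, -, -, hw⟩
  exact (norm_nonneg _).trans (hw 0)

lemma succMin_one_pos [NeZero n] {B : Fin n → Euc n} (hB : LinearIndependent ℝ B) :
    0 < succMin B 1 := by
  obtain ⟨ε, hε, hle⟩ := exists_pos_le_norm_of_mem_lattice hB
  refine hε.trans_le (le_csInf ⟨‖B 0‖, fun _ => B 0, fun _ => mem_lattice_self B 0,
    linearIndependent_unique_iff.mpr (hB.ne_zero 0), fun _ => le_rfl⟩ ?_)
  rintro r ⟨w, hw, hwli, hwr⟩
  exact (hle _ (hw 0) (hwli.ne_zero 0)).trans (hwr 0)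

def IsSRUpdate (τ : ℝ) (B B' : Fin n → Euc n) (i : Fin n) (s : Euc n) : Prop :=
  s ∈ subLattice B i ∧ B' = Function.update B i (B i - s) ∧ ‖B i - s‖ ^ 2 < τ * ‖B i‖ ^ 2

namespace IsSRUpdate

variable {τ : ℝ} {B B' : Fin n → Euc n} {i : Fin n} {s : Euc n}

lemma linearIndependent (h : IsSRUpdate τ B B' i s) (hB : LinearIndependent ℝ B) :
    LinearIndependent ℝ B' := by
  rw [h.2.1]
  exact hB.update_sub_of_mem_span (subLattice_subset_span B i h.1)

lemma lattice_subset (h : IsSRUpdate τ B B' i s) : lattice B' ⊆ lattice B := by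
  refine lattice_subset_lattice fun j => ?_
  rw [h.2.1]
  rcases eq_or_ne j i with rfl | hj
  · have hs := subLattice_subset_lattice B j h.1
    rw [Function.update_self, lattice_eq_span]
    rw [lattice_eq_span] at hs
    exact sub_mem (Submodule.subset_span ⟨j, rfl⟩) hs
  · rw [Function.update_of_ne hj]
    exact mem_lattice_self B j

lemma norm_sq_le (h : IsSRUpdate τ B B' i s) (j : Fin n) :
    ‖B' j‖ ^ 2 ≤ τ ^ (if i = j then 1 else 0) * ‖B j‖ ^ 2 := by
  rw [h.2.1]
  rcases eq_or_ne i j with rfl | hj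
  · simpa using h.2.2.le
  · simp [Function.update_of_ne hj.symm, hj]

end IsSRUpdate

def updateCount (idx : ℕ → Fin n) (i : Fin n) (m : ℕ) : ℕ :=
  ((Finset.range m).filter fun t => idx t = i).card

lemma updateCount_succ (idx : ℕ → Fin n) (i : Fin n) (m : ℕ) :
    updateCount idx i (m + 1) = updateCount idx i m + if idx m = i then 1 else 0 := by
  simp only [updateCount, Finset.card_filter, Finset.sum_range_succ]

lemma sum_updateCount (idx : ℕ → Fin n) (m : ℕ) : ∑ i, updateCount idx i m = m := by
  simp only [updateCount, Finset.card_filter, Finset.sum_comm (s := Finset.univ),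
    Finset.sum_ite_eq, Finset.mem_univ, if_true, Finset.sum_const, Finset.card_range,
    smul_eq_mul, mul_one]

def IsSRUpdateSeq (τ : ℝ) (M : ℕ) (B : ℕ → Fin n → Euc n) (idx : ℕ → Fin n) (s : ℕ → Euc n) :
    Prop :=
  ∀ m < M, IsSRUpdate τ (B m) (B (m + 1)) (idx m) (s m)

namespace IsSRUpdateSeq

variable {τ : ℝ} {M : ℕ} {B : ℕ → Fin n → Euc n} {idx : ℕ → Fin n} {s : ℕ → Euc n}

lemma linearIndependent (h : IsSRUpdateSeq τ M B idx s) (hB : LinearIndependent ℝ (B 0)) :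
    ∀ m ≤ M, LinearIndependent ℝ (B m)
  | 0, _ => hB
  | m + 1, hm => (h m hm).linearIndependent (h.linearIndependent hB m (Nat.le_of_succ_le hm))

lemma lattice_subset (h : IsSRUpdateSeq τ M B idx s) : ∀ m ≤ M, lattice (B m) ⊆ lattice (B 0)
  | 0, _ => subset_rfl
  | m + 1, hm => (h m hm).lattice_subset.trans (h.lattice_subset m (Nat.le_of_succ_le hm))

lemma succMin_one_le_norm (h : IsSRUpdateSeq τ M B idx s) (hB : LinearIndependent ℝ (B 0))
    {m : ℕ} (hm : m ≤ M) (j : Fin n) : succMin (B 0) 1 ≤ ‖B m j‖ :=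
  _root_.succMin_one_le_norm (h.lattice_subset m hm (mem_lattice_self _ j))
    ((h.linearIndependent hB m hm).ne_zero j)

lemma norm_sq_le_pow_updateCount (h : IsSRUpdateSeq τ M B idx s) (hτ : 0 ≤ τ) :
    ∀ m ≤ M, ∀ j, ‖B m j‖ ^ 2 ≤ τ ^ updateCount idx j m * ‖B 0 j‖ ^ 2
  | 0, _, j => by simp [updateCount]
  | m + 1, hm, j => calc
      ‖B (m + 1) j‖ ^ 2 ≤ τ ^ (if idx m = j then 1 else 0) * ‖B m j‖ ^ 2 := (h m hm).norm_sq_le j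
      _ ≤ τ ^ (if idx m = j then 1 else 0) * (τ ^ updateCount idx j m * ‖B 0 j‖ ^ 2) := by
        gcongr
        exact h.norm_sq_le_pow_updateCount hτ m (Nat.le_of_succ_le hm) j
      _ = τ ^ updateCount idx j (m + 1) * ‖B 0 j‖ ^ 2 := by
        rw [updateCount_succ, pow_add]
        ring

end IsSRUpdateSeq

lemma natCast_le_logb_of_le_pow_mul {τ a b : ℝ} {k : ℕ} (hτ0 : 0 < τ) (hτ1 : τ < 1)
    (ha : 0 < a) (h : a ≤ τ ^ k * b) : (k : ℝ) ≤ Real.logb (1 / τ) (b / a) := by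
  have hτk : 0 < τ ^ k := pow_pos hτ0 k
  have hb : 0 < b := pos_of_mul_pos_right (ha.trans_le h) hτk.le
  rw [Real.le_logb_iff_rpow_le ((one_lt_div hτ0).mpr hτ1) (div_pos hb ha), Real.rpow_natCast,
    div_pow, one_pow, div_le_div_iff₀ hτk ha]
  linarith

end

theorem sr_number_of_updates_bound {n : ℕ} (τ : ℝ) (hτ0 : 0 < τ) (hτ1 : τ < 1)
    (M : ℕ) (B : ℕ → Fin n → Euc n) (hlin : LinearIndependent ℝ (B 0))
    (idx : ℕ → Fin n) (s : ℕ → Euc n)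
    (hstep : ∀ m < M, s m ∈ subLattice (B m) (idx m) ∧
      B (m + 1) = Function.update (B m) (idx m) (B m (idx m) - s m) ∧
      ‖B m (idx m) - s m‖ ^ 2 < τ * ‖B m (idx m)‖ ^ 2) :
    (∀ i : Fin n,
      ((((Finset.range M).filter fun m => idx m = i).card : ℝ) ≤
        Real.logb (1 / τ) (‖B 0 i‖ ^ 2 / succMin (B 0) 1 ^ 2))) ∧
      (M : ℝ) ≤ ∑ i : Fin n, Real.logb (1 / τ) (‖B 0 i‖ ^ 2 / succMin (B 0) 1 ^ 2) := by
  have hseq : IsSRUpdateSeq τ M B idx s := hstep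
  have hcount (i : Fin n) : (updateCount idx i M : ℝ) ≤
      Real.logb (1 / τ) (‖B 0 i‖ ^ 2 / succMin (B 0) 1 ^ 2) := by
    have : NeZero n := NeZero.of_pos i.pos
    have hmin : 0 < succMin (B 0) 1 := succMin_one_pos hlin
    refine natCast_le_logb_of_le_pow_mul hτ0 hτ1 (pow_pos hmin 2) ?_
    calc succMin (B 0) 1 ^ 2 ≤ ‖B M i‖ ^ 2 :=
          pow_le_pow_left₀ hmin.le (hseq.succMin_one_le_norm hlin le_rfl i) 2
      _ ≤ τ ^ updateCount idx i M * ‖B 0 i‖ ^ 2 :=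
          hseq.norm_sq_le_pow_updateCount hτ0.le M le_rfl i
  refine ⟨hcount, ?_⟩
  calc (M : ℝ) = ∑ i, (updateCount idx i M : ℝ) := by exact_mod_cast (sum_updateCount idx M).symm
    _ ≤ _ := Finset.sum_le_sum fun i _ => hcount i
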